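/- If λ_1 − λ_2 ≥ n/(n−1), then h = sum_{i=2}^n (λ_1 − λ_i) ≥ n, and consequently F cannot be completed to a tight frame by fewer than n unit-norm vectors. -/

import Mathlib

open scoped BigOperators

noncomputable def frameOp {n p : ℕ} (f : Fin p → EuclideanSpace ℂ (Fin n)) :
    EuclideanSpace ℂ (Fin n) →L[ℂ] EuclideanSpace ℂ (Fin n) :=
  ∑ i, (innerSL ℂ (f i)).smulRight (f i)

def HasEigenvalues {n : ℕ} (S : EuclideanSpace ℂ (Fin n) →L[ℂ] EuclideanSpace ℂ (Fin n))
    (Λ : Fin n → ℝ) : Prop :=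
  Antitone Λ ∧ ∃ e : OrthonormalBasis (Fin n) ℂ (EuclideanSpace ℂ (Fin n)),
    ∀ i, S (e i) = (Λ i : ℂ) • e i

noncomputable def tailSum {n : ℕ} (hn : 0 < n) (Λ : Fin n → ℝ) (k : ℕ) : ℝ :=
  ∑ i ∈ Finset.range k, Λ ⟨n - 1 - i, by omega⟩

def Completable {n p : ℕ} (f : Fin p → EuclideanSpace ℂ (Fin n)) (a : ℕ → ℝ) (r : ℕ) : Prop :=
  ∃ (c : ℝ) (g : Fin r → EuclideanSpace ℂ (Fin n)), 0 < c ∧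
    (∀ i : Fin r, ‖g i‖ ^ 2 = a (i : ℕ)) ∧
    frameOp f + frameOp g = (c : ℂ) • ContinuousLinearMap.id ℂ (EuclideanSpace ℂ (Fin n))

noncomputable def cseq {n : ℕ} (hn : 0 < n) (Λ : Fin n → ℝ) (a : ℕ → ℝ) : ℕ → ℝ
  | 0 => Λ ⟨0, hn⟩
  | k + 1 => max (cseq hn Λ a k)
      ((1 / (k + 1 : ℝ)) * (∑ i ∈ Finset.range (k + 1), a i + tailSum hn Λ (k + 1)))

def IsBessel {n : ℕ} (g : ℕ → EuclideanSpace ℂ (Fin n)) : Prop :=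
  ∃ b > 0, ∀ x : EuclideanSpace ℂ (Fin n),
    Summable (fun i => ‖(inner ℂ (g i) x : ℂ)‖ ^ 2) ∧
    ∑' i, ‖(inner ℂ (g i) x : ℂ)‖ ^ 2 ≤ b * ‖x‖ ^ 2

def CompletableInf {n p : ℕ} (f : Fin p → EuclideanSpace ℂ (Fin n)) (a : ℕ → ℝ) : Prop :=
  ∃ (c : ℝ) (g : ℕ → EuclideanSpace ℂ (Fin n)), 0 < c ∧ IsBessel g ∧
    (∀ i, ‖g i‖ ^ 2 = a i) ∧
    ∀ x, frameOp f x + ∑' i, (inner ℂ (g i) x : ℂ) • g i = (c : ℂ) • x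

/-! In an eigenbasis `e` of `S_F`, a completion with `S_F + S_G = c • 1` makes `S_G` diagonal with
entries `c - λ_i = ∑ⱼ |⟪g_j, e_i⟫|² ≥ 0`, and its trace `∑ᵢ (c - λ_i)` is `∑ⱼ ‖g_j‖² = r`. Since
`c ≥ λ_1` and `λ_1 - λ_i ≥ λ_1 - λ_2 ≥ n/(n-1)` for `i ≥ 2`, this forces `r ≥ n`. -/

lemma frameOp_apply {n p : ℕ} (f : Fin p → EuclideanSpace ℂ (Fin n))
    (x : EuclideanSpace ℂ (Fin n)) :
    frameOp f x = ∑ i, inner ℂ (f i) x • f i := by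
  simp [frameOp]

lemma re_inner_frameOp_self {n p : ℕ} (f : Fin p → EuclideanSpace ℂ (Fin n))
    (x : EuclideanSpace ℂ (Fin n)) :
    (inner ℂ x (frameOp f x)).re = ∑ i, ‖inner ℂ (f i) x‖ ^ 2 := by
  rw [frameOp_apply, inner_sum, Complex.re_sum]
  refine Finset.sum_congr rfl fun i _ => ?_
  rw [inner_smul_right, ← inner_conj_symm x (f i), RCLike.mul_conj]
  norm_cast

lemma sum_re_inner_frameOp_orthonormalBasis {ι : Type*} [Fintype ι] {n p : ℕ}
    (f : Fin p → EuclideanSpace ℂ (Fin n)) (e : OrthonormalBasis ι ℂ (EuclideanSpace ℂ (Fin n))) :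
    ∑ i, (inner ℂ (e i) (frameOp f (e i))).re = ∑ j, ‖f j‖ ^ 2 := by
  simp_rw [re_inner_frameOp_self]
  rw [Finset.sum_comm]
  simp_rw [e.sum_sq_norm_inner_left]

lemma mul_sub_le_sum_sub {n : ℕ} (hn : 1 < n) {Λ : Fin n → ℝ} (hΛ : Antitone Λ) {μ : ℝ}
    (hμ : Λ ⟨0, Nat.zero_lt_of_lt hn⟩ ≤ μ) :
    ((n : ℝ) - 1) * (Λ ⟨0, Nat.zero_lt_of_lt hn⟩ - Λ ⟨1, hn⟩) ≤ ∑ i, (μ - Λ i) := by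
  obtain ⟨m, rfl⟩ : ∃ m, n = m + 1 := ⟨n - 1, by omega⟩
  change Λ 0 ≤ μ at hμ
  change ((m + 1 : ℕ) - 1 : ℝ) * (Λ 0 - Λ ⟨1, hn⟩) ≤ _
  have hgap : ∀ i : Fin m, Λ 0 - Λ ⟨1, hn⟩ ≤ μ - Λ i.succ := fun i => by
    have : Λ i.succ ≤ Λ ⟨1, hn⟩ := hΛ (Fin.mk_le_mk.mpr (by simp))
    linarith
  calc ((m + 1 : ℕ) - 1 : ℝ) * (Λ 0 - Λ ⟨1, hn⟩) = ∑ _ : Fin m, (Λ 0 - Λ ⟨1, hn⟩) := by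
        simp; ring
    _ ≤ ∑ i : Fin m, (μ - Λ i.succ) := Finset.sum_le_sum fun i _ => hgap i
    _ ≤ ∑ i, (μ - Λ i) := by rw [Fin.sum_univ_succ]; linarith

lemma le_sum_sub_of_gap {n : ℕ} (hn : 2 ≤ n) {Λ : Fin n → ℝ} (hΛ : Antitone Λ)
    (hgap : (n : ℝ) / (n - 1) ≤ Λ ⟨0, Nat.zero_lt_of_lt hn⟩ - Λ ⟨1, hn⟩) {μ : ℝ}
    (hμ : Λ ⟨0, Nat.zero_lt_of_lt hn⟩ ≤ μ) :
    (n : ℝ) ≤ ∑ i, (μ - Λ i) := by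
  have hn' : (1 : ℝ) < n := by exact_mod_cast hn
  calc (n : ℝ) = (n - 1) * (n / (n - 1)) := (mul_div_cancel₀ _ (by linarith)).symm
    _ ≤ (n - 1) * (Λ ⟨0, Nat.zero_lt_of_lt hn⟩ - Λ ⟨1, hn⟩) := by gcongr
    _ ≤ ∑ i, (μ - Λ i) := mul_sub_le_sum_sub hn hΛ hμ

lemma Completable.exists_le_and_sum_sub_eq {n p r : ℕ} {f : Fin p → EuclideanSpace ℂ (Fin n)}
    {a : ℕ → ℝ} {Λ : Fin n → ℝ} (hΛ : HasEigenvalues (frameOp f) Λ) (h : Completable f a r) :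
    ∃ c : ℝ, (∀ i, Λ i ≤ c) ∧ ∑ i, (c - Λ i) = ∑ j : Fin r, a j := by
  obtain ⟨-, e, he⟩ := hΛ
  obtain ⟨c, g, -, hg, hsum⟩ := h
  have hdiag : ∀ i, c - Λ i = (inner ℂ (e i) (frameOp g (e i))).re := fun i => by
    have hgi : frameOp g (e i) = ((c - Λ i : ℝ) : ℂ) • e i := by
      have := congr($hsum (e i))
      rw [add_apply, he i, smul_apply, ContinuousLinearMap.id_apply] at this
      rw [Complex.ofReal_sub, sub_smul, ← this, add_sub_cancel_left]
    rw [hgi, inner_smul_right, inner_self_eq_norm_sq_to_K, e.orthonormal.1 i]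
    simp
  refine ⟨c, fun i => ?_, ?_⟩
  · have hnonneg : 0 ≤ c - Λ i := by rw [hdiag, re_inner_frameOp_self]; positivity
    linarith
  · simp_rw [hdiag, sum_re_inner_frameOp_orthonormalBasis, hg]

theorem gap_implies_many_vectors_needed {n p : ℕ} (hn : 2 ≤ n)
    (f : Fin p → EuclideanSpace ℂ (Fin n)) (Λ : Fin n → ℝ)
    (hΛ : HasEigenvalues (frameOp f) Λ)
    (hgap : (n : ℝ) / (n - 1) ≤ Λ ⟨0, by omega⟩ - Λ ⟨1, by omega⟩) :
    (n : ℝ) ≤ ∑ i, (Λ ⟨0, by omega⟩ - Λ i) ∧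
    ∀ r, r < n → ¬ Completable f (fun _ => (1 : ℝ)) r := by
  refine ⟨le_sum_sub_of_gap hn hΛ.1 hgap le_rfl, fun r hr hcomp => ?_⟩
  obtain ⟨c, hc, hsum⟩ := hcomp.exists_le_and_sum_sub_eq hΛ
  have hnr : (n : ℝ) ≤ r := by
    simpa [hsum] using le_sum_sub_of_gap hn hΛ.1 hgap (hc _)
  exact absurd hr (by exact_mod_cast hnr.not_gt)
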